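/- Let T be a square matrix over a commutative ring whose entries encode valid transitions of independent-set states around a cycle; then for the prism graph, Ind(GP(n,1), x) = Tr(T^n) where T is the 4×4 matrix indexed by states (a,b) ∈ {0,1}^2 with a·b = 0, and T((a,b),(a',b')) = x^{a'+b'} if a·a' = 0 and b·b' = 0, and 0 otherwise. -/

import Mathlib

/-!
Record an independent set `S` of `GP(n,1)` by its sequence of spoke states
`g i = (u_i ∈ S, v_i ∈ S)` for `i : ZMod n`. The edges of the prism are the spokes and the
edges between consecutive spoke pairs, so `S` is independent exactly when every pair of
consecutive states is compatible, i.e. `T (g i) (g (i + 1)) ≠ 0`; the product of these entries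
is then `x ^ |S|`. Expanding `Tr (T ^ n)` as a sum over closed walks `ZMod n → states` gives
the independence polynomial.
-/

open Polynomial

/-- A finset of vertices is independent: no two of its vertices are adjacent. -/
def SimpleGraph.IsIndepFinset {V : Type*} (G : SimpleGraph V) (S : Finset V) : Prop :=
  ∀ v ∈ S, ∀ w ∈ S, ¬ G.Adj v w

open scoped Classical in
/-- The independence polynomial `Ind(G,x) = ∑_S x^{|S|}` over independent sets `S`. -/
noncomputable def indPoly {V : Type*} [Fintype V] (G : SimpleGraph V) : Polynomial ℝ :=
  ∑ S ∈ Finset.univ.filter (fun S => G.IsIndepFinset S), X ^ S.card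

open scoped Classical in
/-- The independence number: the largest cardinality of an independent set. -/
noncomputable def indepNum {V : Type*} [Fintype V] (G : SimpleGraph V) : ℕ :=
  (Finset.univ.filter (fun S => G.IsIndepFinset S)).sup Finset.card

/-- Underlying relation of the generalized Petersen graph `GP(n,k)`. -/
def GPRel (n k : ℕ) : (ZMod n ⊕ ZMod n) → (ZMod n ⊕ ZMod n) → Prop
  | .inl i, .inl j => j = i + 1          -- outer cycle
  | .inr i, .inr j => j = i + (k : ZMod n)  -- inner chords
  | .inl i, .inr j => i = j              -- spokes
  | .inr _, .inl _ => False

/-- The generalized Petersen graph `GP(n,k)` on vertices `u_i = inl i`, `v_i = inr i`. -/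
def GP (n k : ℕ) : SimpleGraph (ZMod n ⊕ ZMod n) := SimpleGraph.fromRel (GPRel n k)


/-- Transfer matrix for the prism graph, indexed by occupancy states of a spoke pair. -/
noncomputable def prismT : Matrix (Bool × Bool) (Bool × Bool) (Polynomial ℝ) :=
  fun p q =>
    if (p.1 && p.2) = false ∧ (q.1 && q.2) = false ∧
        (p.1 && q.1) = false ∧ (p.2 && q.2) = false then
      X ^ ((if q.1 then 1 else 0) + (if q.2 then 1 else 0))
    else 0

open Finset

namespace Matrix

variable {ι R : Type*} [Fintype ι] [DecidableEq ι] [CommSemiring R]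

theorem pow_succ_apply_eq_sum_prod (M : Matrix ι ι R) (m : ℕ) (a b : ι) :
    (M ^ (m + 1)) a b = ∑ f : Fin m → ι,
      ∏ i, M ((Fin.cons a f : Fin (m + 1) → ι) i) ((Fin.snoc f b : Fin (m + 1) → ι) i) := by
  induction m generalizing a with
  | zero => simp [Fin.snoc]
  | succ m ih =>
    rw [pow_succ', mul_apply, ← (Fin.consEquiv fun _ => ι).sum_comp, Fintype.sum_prod_type]
    refine Fintype.sum_congr _ _ fun c => ?_
    rw [ih, mul_sum]
    refine Fintype.sum_congr _ _ fun f => ?_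
    simp [Fin.consEquiv, Fin.prod_univ_succ, ← Fin.cons_snoc_eq_snoc_cons]

theorem trace_pow_succ_eq_sum_prod (M : Matrix ι ι R) (m : ℕ) :
    (M ^ (m + 1)).trace = ∑ g : Fin (m + 1) → ι, ∏ i, M (g i) (g (i + 1)) := by
  simp only [trace, diag, pow_succ_apply_eq_sum_prod, Fin.snoc_eq_cons_rotate, finRotate_apply]
  rw [← (Fin.consEquiv fun _ => ι).sum_comp, Fintype.sum_prod_type]
  rfl

theorem trace_pow_eq_sum_prod_zmod (M : Matrix ι ι R) (n : ℕ) [NeZero n] :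
    (M ^ n).trace = ∑ g : ZMod n → ι, ∏ i, M (g i) (g (i + 1)) := by
  obtain ⟨m, rfl⟩ := Nat.exists_eq_succ_of_ne_zero (NeZero.ne n)
  exact trace_pow_succ_eq_sum_prod M m

end Matrix

theorem SimpleGraph.isIndepFinset_fromRel_iff {V : Type*} {r : V → V → Prop}
    (hr : ∀ v w, r v w → v ≠ w) (S : Finset V) :
    (fromRel r).IsIndepFinset S ↔ ∀ v ∈ S, ∀ w ∈ S, ¬ r v w := by
  refine ⟨fun h v hv w hw hvw => h v hv w hw ⟨hr v w hvw, .inl hvw⟩, ?_⟩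
  rintro h v hv w hw ⟨-, hvw | hwv⟩
  exacts [h v hv w hw hvw, h w hw v hv hwv]

def finsetSumEquivBoolPair (α : Type*) [Fintype α] [DecidableEq α] :
    Finset (α ⊕ α) ≃ (α → Bool × Bool) where
  toFun S i := (Sum.inl i ∈ S, Sum.inr i ∈ S)
  invFun g := (univ.filter fun i => (g i).1).disjSum (univ.filter fun i => (g i).2)
  left_inv S := by ext (i | i) <;> simp
  right_inv g := by ext i <;> simp

def boolPairWeight (p : Bool × Bool) : ℕ := (if p.1 then 1 else 0) + (if p.2 then 1 else 0)

theorem card_eq_sum_boolPairWeight {α : Type*} [Fintype α] [DecidableEq α]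
    (S : Finset (α ⊕ α)) :
    S.card = ∑ i, boolPairWeight (finsetSumEquivBoolPair α S i) := by
  calc S.card = ∑ v, if v ∈ S then 1 else 0 := by
        rw [sum_boole, filter_mem_eq_inter, univ_inter, Nat.cast_id]
    _ = _ := by
        rw [Fintype.sum_sum_type, ← sum_add_distrib]
        simp [boolPairWeight, finsetSumEquivBoolPair]

def PrismCompatible (p q : Bool × Bool) : Prop :=
  (p.1 && p.2) = false ∧ (q.1 && q.2) = false ∧ (p.1 && q.1) = false ∧ (p.2 && q.2) = false

instance : DecidableRel PrismCompatible := fun _ _ => inferInstanceAs (Decidable (_ ∧ _))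

theorem prismT_apply (p q : Bool × Bool) :
    prismT p q = if PrismCompatible p q then X ^ boolPairWeight q else 0 :=
  rfl

theorem prod_prismT_perm {α : Type*} [Fintype α] (σ : Equiv.Perm α) (g : α → Bool × Bool) :
    ∏ i, prismT (g i) (g (σ i)) =
      if ∀ i, PrismCompatible (g i) (g (σ i)) then X ^ ∑ i, boolPairWeight (g i) else 0 := by
  simp only [prismT_apply, Fintype.prod_ite_zero, prod_pow_eq_pow_sum,
    Equiv.sum_comp σ fun i => boolPairWeight (g i)]

theorem ne_of_GPRel_one {n : ℕ} [Fact (1 < n)] {v w : ZMod n ⊕ ZMod n} (h : GPRel n 1 v w) :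
    v ≠ w := by
  rcases v with i | i <;> rcases w with j | j <;> simp_all [GPRel]

theorem GP_one_isIndepFinset_iff {n : ℕ} [NeZero n] [Fact (1 < n)]
    (S : Finset (ZMod n ⊕ ZMod n)) :
    (GP n 1).IsIndepFinset S ↔ ∀ i,
      PrismCompatible (finsetSumEquivBoolPair _ S i) (finsetSumEquivBoolPair _ S (i + 1)) := by
  rw [GP, SimpleGraph.isIndepFinset_fromRel_iff fun _ _ => ne_of_GPRel_one]
  simp only [Sum.forall, GPRel, PrismCompatible, finsetSumEquivBoolPair, Equiv.coe_fn_mk,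
    Nat.cast_one, Bool.and_eq_false_imp, decide_eq_true_eq, decide_eq_false_iff_not,
    not_false_eq_true, implies_true, true_and]
  constructor
  · rintro ⟨hu, hv⟩ i
    exact ⟨fun h h' => (hu i h).2 i h' rfl, fun h h' => (hu _ h).2 _ h' rfl,
      fun h h' => (hu i h).1 _ h' rfl, fun h h' => hv i h _ h' rfl⟩
  · intro h
    refine ⟨fun i hi => ⟨?_, ?_⟩, ?_⟩
    · rintro _ hj rfl
      exact (h i).2.2.1 hi hj
    · rintro _ hj rfl
      exact (h i).1 hi hj
    · rintro i hi _ hj rfl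
      exact (h i).2.2.2 hi hj

/-- Transfer matrix formula: Ind(GP(n,1), x) = Tr(T^n). -/
theorem prism_transfer_matrix (n : ℕ) [NeZero n] (hn : 3 ≤ n) :
    indPoly (GP n 1) = (prismT ^ n).trace := by
  have : Fact (1 < n) := ⟨by omega⟩
  rw [Matrix.trace_pow_eq_sum_prod_zmod, indPoly, sum_filter]
  refine Fintype.sum_equiv (finsetSumEquivBoolPair _) _ _ fun S => ?_
  have hprod := prod_prismT_perm (Equiv.addRight 1) (finsetSumEquivBoolPair _ S)
  simp only [Equiv.coe_addRight] at hprod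
  simp only [hprod, GP_one_isIndepFinset_iff, card_eq_sum_boolPairWeight]
  -- the two sides differ only in their `Decidable` instances
  congr
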